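/- Let n be an odd positive integer and let v ∈ 𝔽_2^n be a symmetric vector with v_0 = 0. Then v and ê work together. -/

import Mathlib

/-- The cyclic shift operator on `𝔽₂ⁿ` (indexed by `ZMod n`): `(cshift x) i = x (i - 1)`. -/
def cshift {n : ℕ} (x : ZMod n → ZMod 2) : ZMod n → ZMod 2 := fun i => x (i - 1)

/-- The standard dot product over `𝔽₂`. -/
def dot {n : ℕ} [NeZero n] (v x : ZMod n → ZMod 2) : ZMod 2 := ∑ i, v i * x i

/-- A vector `v ∈ 𝔽₂ⁿ` works if for every `x` some cyclic shift of `x` is orthogonal to `v`. -/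
def Works {n : ℕ} [NeZero n] (v : ZMod n → ZMod 2) : Prop :=
  ∀ x : ZMod n → ZMod 2, ∃ k : ℕ, dot v (cshift^[k] x) = 0

/-- Two vectors `v, w ∈ 𝔽₂ⁿ` work together if for every `x` there is a single cyclic shift
of `x` orthogonal to both. -/
def WorkTogether2 {n : ℕ} [NeZero n] (v w : ZMod n → ZMod 2) : Prop :=
  ∀ x : ZMod n → ZMod 2, ∃ k : ℕ,
    dot v (cshift^[k] x) = 0 ∧ dot w (cshift^[k] x) = 0

/-- The vector `ê ∈ 𝔽₂ⁿ` with `ê 0 = 0` and `ê i = 1` for `i ≠ 0`. -/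
def ehat (n : ℕ) : ZMod n → ZMod 2 := fun i => if i = 0 then 0 else 1

/-!
Write `F k` and `E k` for the dot products of `v` and `ê` with the `k`-th shift of `x`; it suffices
that the products `(1 + F k) * (1 + E k)` sum to `1` over `k ∈ ℤ/n`. With `S = ∑ xᵢ` and
`V = ∑ vᵢ`, one has `E k = S + x₋ₖ` and `∑ F = V S`, so since `n` is odd the sum is
`1 + V S (1 + S) + ∑ F k x₋ₖ = 1 + ∑ F k x₋ₖ`. The last sum equals `∑ vᵢ gᵢ` for the
autocorrelation `gᵢ = ∑ⱼ x_{i+j} xⱼ`; as `v` and `g` are symmetric and `n` is odd, the terms at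
`i ≠ 0` cancel in pairs `{i, -i}`, and the term at `0` vanishes because `v₀ = 0`.
-/

open Finset

section

variable {n : ℕ}

lemma cshift_iterate_apply (k : ℕ) (x : ZMod n → ZMod 2) (i : ZMod n) :
    (cshift^[k] x) i = x (i - k) := by
  induction k generalizing x i with
  | zero => simp
  | succ k ih =>
    rw [Function.iterate_succ_apply, ih]
    simp only [cshift, Nat.cast_succ, sub_sub]

lemma ZMod.sum_eq_zero_of_odd_of_apply_neg {R : Type*} [AddCommMonoid R] [NeZero n]
    (hn : Odd n) (hR : ∀ a : R, a + a = 0) (f : ZMod n → R) (h0 : f 0 = 0)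
    (hf : ∀ i, f (-i) = f i) : ∑ i, f i = 0 := by
  refine sum_involution (fun i _ => -i) (fun i _ => by rw [hf, hR]) (fun i _ hi hneg => hi ?_)
    (fun i _ => mem_univ _) (fun i _ => neg_neg i)
  have h2 : 2 * i.val ≠ n := fun h => (Nat.not_even_iff_odd.mpr hn) ⟨i.val, by omega⟩
  rw [((ZMod.neg_eq_self_iff i).mp hneg).resolve_right h2, h0]

variable [NeZero n]

lemma dot_cshift_iterate_val (v x : ZMod n → ZMod 2) (k : ZMod n) :
    dot v (cshift^[k.val] x) = ∑ i, v i * x (i - k) := by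
  simp only [dot, cshift_iterate_apply, ZMod.natCast_zmod_val]

lemma sum_dot_cshift_iterate_val (v x : ZMod n → ZMod 2) :
    ∑ k : ZMod n, dot v (cshift^[k.val] x) = (∑ i, v i) * ∑ i, x i := by
  simp only [dot_cshift_iterate_val]
  rw [sum_comm, sum_mul]
  refine sum_congr rfl fun i _ => ?_
  rw [← mul_sum]
  exact congrArg _ (Fintype.sum_equiv (Equiv.subLeft i) _ _ fun _ => rfl)

lemma dot_ehat_add_apply_zero (y : ZMod n → ZMod 2) : dot (ehat n) y + y 0 = ∑ i, y i := by
  rw [dot, ← add_sum_erase _ _ (mem_univ 0), ← add_sum_erase _ _ (mem_univ 0),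
    sum_congr rfl fun i hi => by rw [ehat, if_neg (ne_of_mem_erase hi), one_mul], ehat,
    if_pos rfl, zero_mul, zero_add, add_comm]

lemma dot_ehat_cshift_iterate_val (x : ZMod n → ZMod 2) (k : ZMod n) :
    dot (ehat n) (cshift^[k.val] x) = (∑ i, x i) + x (-k) := by
  rw [← Fintype.sum_equiv (Equiv.subRight k) (cshift^[k.val] x) x fun i => by
      rw [cshift_iterate_apply, ZMod.natCast_zmod_val, Equiv.subRight_apply],
    ← dot_ehat_add_apply_zero, cshift_iterate_apply, ZMod.natCast_zmod_val, zero_sub, add_assoc,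
    CharTwo.add_self_eq_zero, add_zero]

lemma sum_dot_cshift_iterate_val_mul_apply_neg (v x : ZMod n → ZMod 2) :
    ∑ k : ZMod n, dot v (cshift^[k.val] x) * x (-k) = ∑ i, v i * ∑ j, x (i + j) * x j := by
  simp only [dot_cshift_iterate_val, sum_mul, mul_sum]
  rw [sum_comm]
  refine sum_congr rfl fun i _ => Fintype.sum_equiv (Equiv.neg _) _ _ fun k => ?_
  simp only [Equiv.neg_apply, sub_eq_add_neg, mul_assoc]

lemma autocorrelation_neg {R : Type*} [CommSemiring R] (x : ZMod n → R) (i : ZMod n) :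
    ∑ j, x (-i + j) * x j = ∑ j, x (i + j) * x j :=
  Fintype.sum_equiv (Equiv.subRight i) _ _ fun j => by
    simp only [Equiv.subRight_apply, add_sub_cancel, neg_add_eq_sub, mul_comm]

end

lemma ZMod.eq_zero_and_eq_zero_of_one_add_mul_one_add_ne_zero {a b : ZMod 2}
    (h : (1 + a) * (1 + b) ≠ 0) : a = 0 ∧ b = 0 := by
  revert a b h; decide

/-- For `n` odd, every symmetric vector `v ∈ 𝔽₂ⁿ` with `v 0 = 0` works together with `ê`. -/
theorem symmetric_works_with_ehat (n : ℕ) [NeZero n] (hn : Odd n)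
    (v : ZMod n → ZMod 2) (h0 : v 0 = 0) (hsym : ∀ i : ZMod n, v i = v (-i)) :
    WorkTogether2 v (ehat n) := by
  intro x
  set F : ZMod n → ZMod 2 := fun k => dot v (cshift^[k.val] x)
  set S := ∑ i, x i
  have hcard : (Fintype.card (ZMod n) : ZMod 2) = 1 := by
    rwa [ZMod.card, ZMod.natCast_eq_one_iff_odd]
  have hsumF : ∑ k, F k = (∑ i, v i) * S := sum_dot_cshift_iterate_val v x
  have hsumFx : ∑ k, F k * x (-k) = 0 := by
    rw [sum_dot_cshift_iterate_val_mul_apply_neg]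
    refine ZMod.sum_eq_zero_of_odd_of_apply_neg hn CharTwo.add_self_eq_zero _ (by simp [h0])
      fun i => ?_
    rw [autocorrelation_neg, ← hsym]
  have hsumx : ∑ k, x (-k) = S := Fintype.sum_equiv (Equiv.neg _) _ x fun _ => rfl
  have hsum : ∑ k, (1 + F k) * (1 + (S + x (-k))) = 1 := by
    have hexpand : ∀ k, (1 + F k) * (1 + (S + x (-k))) =
        1 + (S + x (-k)) + F k * (1 + S) + F k * x (-k) := fun k => by ring
    simp only [hexpand, sum_add_distrib, ← sum_mul, sum_const, card_univ, nsmul_eq_mul, hcard,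
      hsumx, hsumF, hsumFx]
    generalize ∑ i, v i = V; generalize S = s; revert V s; decide
  obtain ⟨k, -, hk⟩ := exists_ne_zero_of_sum_ne_zero (hsum ▸ one_ne_zero)
  obtain ⟨hF, hE⟩ := ZMod.eq_zero_and_eq_zero_of_one_add_mul_one_add_ne_zero hk
  exact ⟨k.val, hF, (dot_ehat_cshift_iterate_val x k).trans hE⟩
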